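/- Let R be a commutative ring, I_1,…,I_r ideals of R, and t_1,…,t_r indeterminates. An element s ∈ R[t_1,…,t_r] homogeneous of multidegree n = (n_1,…,n_r), say s = s_n t^n with s_n ∈ R, is integral over the multi-Rees subring ⊕_{m∈ℕ^r} I_1^{m_1}⋯I_r^{m_r} t^m if and only if s_n is integral over the ideal I_1^{n_1}⋯I_r^{n_r}. -/

import Mathlib

/-!
Read off in multidegree `e • n`, a monic equation of degree `e` for `c tⁿ` over the multi-Rees
algebra is an equation of integral dependence for `c` over `J = ∏ I i ^ n i`, because the
coefficient of `X^i` contributes its component of multidegree `(e - i) • n`, which lies in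
`J ^ (e - i)`. Conversely, the coefficients `b_i ∈ J ^ (e - i)` of such an equation lift to the
monomials `b_i t^{(e - i) n}` of the multi-Rees algebra.
-/
/-- The multi-Rees algebra `R(I_1,…,I_r) = ⊕_{m ∈ ℕ^r} I^m t^m`, realised as the subalgebra of
`R[t_1,…,t_r]` consisting of those polynomials whose coefficient in multidegree `m` lies in
`I_1^{m_1}⋯I_r^{m_r}`. -/
def multiRees {R : Type*} [CommRing R] {r : ℕ} (I : Fin r → Ideal R) :
    Subalgebra R (MvPolynomial (Fin r) R) where
  carrier := {p | ∀ m : Fin r →₀ ℕ, p.coeff m ∈ ∏ i, (I i) ^ m i}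
  add_mem' := by
    intro p q hp hq m
    simpa [MvPolynomial.coeff_add] using add_mem (hp m) (hq m)
  mul_mem' := by
    intro p q hp hq m
    rw [MvPolynomial.coeff_mul]
    refine Ideal.sum_mem _ fun x hx => ?_
    have hxm : x.1 + x.2 = m := Finset.HasAntidiagonal.mem_antidiagonal.mp hx
    have key : (∏ i, (I i) ^ x.1 i) * (∏ i, (I i) ^ x.2 i) = ∏ i, (I i) ^ m i := by
      rw [← Finset.prod_mul_distrib]
      refine Finset.prod_congr rfl fun i _ => ?_
      rw [← pow_add, ← Finsupp.add_apply, hxm]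
    exact key ▸ Ideal.mul_mem_mul (hp x.1) (hq x.2)
  algebraMap_mem' := by
    intro s m
    rw [MvPolynomial.algebraMap_eq, MvPolynomial.coeff_C]
    split_ifs with h
    · subst h
      simp [Ideal.top_pow]
    · exact Submodule.zero_mem _

/-- An element `x` of a commutative ring is *integral over an ideal* `I` if it satisfies an
equation `x^e + a_1 x^{e-1} + ⋯ + a_e = 0` with `a_i ∈ I^i`. -/
def IsIntegralOverIdeal {R : Type*} [CommRing R] (x : R) (I : Ideal R) : Prop :=
  ∃ e : ℕ, 0 < e ∧ ∃ a : ℕ → R, (∀ i : ℕ, 1 ≤ i → i ≤ e → a i ∈ I ^ i) ∧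
    x ^ e + ∑ i ∈ Finset.Icc 1 e, a i * x ^ (e - i) = 0

open Finset MvPolynomial

theorem Finset.sum_Icc_one_eq_sum_range_sub {M : Type*} [AddCommMonoid M] (f : ℕ → M) (e : ℕ) :
    ∑ i ∈ Icc 1 e, f i = ∑ i ∈ range e, f (e - i) := by
  rw [← Nat.Ico_zero_eq_range, sum_Ico_reflect f 0 (Nat.le_succ e), Nat.add_sub_cancel_left,
    Nat.sub_zero, Ico_add_one_right_eq_Icc]

theorem isIntegralOverIdeal_iff_exists_sum_range {R : Type*} [CommRing R] {x : R} {I : Ideal R} :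
    IsIntegralOverIdeal x I ↔ ∃ (e : ℕ) (b : ℕ → R), (∀ i < e, b i ∈ I ^ (e - i)) ∧
      x ^ e + ∑ i ∈ range e, b i * x ^ i = 0 := by
  constructor
  · rintro ⟨e, -, a, ha, hx⟩
    refine ⟨e, fun i => a (e - i), fun i hi => ha _ (by omega) (by omega), ?_⟩
    rwa [sum_Icc_one_eq_sum_range_sub,
      sum_congr rfl fun i hi => by rw [Nat.sub_sub_self (mem_range.1 hi).le]] at hx
  · rintro ⟨e, b, hb, hx⟩
    rcases Nat.eq_zero_or_pos e with rfl | he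
    · have : Subsingleton R := subsingleton_of_zero_eq_one (by simpa using hx.symm)
      exact ⟨1, one_pos, 0, fun _ _ _ => zero_mem _, Subsingleton.elim _ _⟩
    refine ⟨e, he, fun i => b (e - i), fun i h1 h2 => ?_, ?_⟩
    · simpa [Nat.sub_sub_self h2] using hb (e - i) (by omega)
    · rwa [sum_Icc_one_eq_sum_range_sub fun i => b (e - i) * x ^ (e - i),
        sum_congr rfl fun i hi => by rw [Nat.sub_sub_self (mem_range.1 hi).le]]

theorem Finset.prod_pow_finsupp_pow {ι M : Type*} [Fintype ι] [CommMonoid M] (f : ι → M)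
    (n : ι →₀ ℕ) (k : ℕ) : (∏ i, f i ^ n i) ^ k = ∏ i, f i ^ (k • n) i := by
  rw [← prod_pow]
  exact prod_congr rfl fun i _ => by rw [← pow_mul, Finsupp.smul_apply, smul_eq_mul, mul_comm]

namespace MvPolynomial

variable {σ R : Type*} [CommSemiring R]

theorem monomial_mul_monomial_pow_of_le {e i : ℕ} (h : i ≤ e) (n : σ →₀ ℕ) (a c : R) :
    monomial ((e - i) • n) a * monomial n c ^ i = monomial (e • n) (a * c ^ i) := by
  rw [monomial_pow, monomial_mul, ← add_smul, Nat.sub_add_cancel h]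

theorem coeff_nsmul_mul_monomial_pow_of_le {e i : ℕ} (h : i ≤ e) (n : σ →₀ ℕ) (c : R)
    (p : MvPolynomial σ R) :
    coeff (e • n) (p * monomial n c ^ i) = coeff ((e - i) • n) p * c ^ i := by
  rw [monomial_pow, ← Nat.sub_add_cancel h, add_smul, coeff_mul_monomial, Nat.add_sub_cancel]

end MvPolynomial

theorem monomial_mem_multiRees_iff {R : Type*} [CommRing R] {r : ℕ} (I : Fin r → Ideal R)
    (m : Fin r →₀ ℕ) (a : R) : monomial m a ∈ multiRees I ↔ a ∈ ∏ i, I i ^ m i := by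
  refine ⟨fun h => by simpa using h m, fun h m' => ?_⟩
  rw [coeff_monomial]
  split_ifs with hm
  · exact hm ▸ h
  · exact zero_mem _

section MultiRees

variable {R : Type*} [CommRing R] {r : ℕ} (I : Fin r → Ideal R) (n : Fin r →₀ ℕ) (c : R)

theorem isIntegralOverIdeal_of_isIntegral_monomial
    (h : IsIntegral (multiRees I) (monomial n c : MvPolynomial (Fin r) R)) :
    IsIntegralOverIdeal c (∏ i, I i ^ n i) := by
  obtain ⟨P, hP, hPs⟩ := h
  set e := P.natDegree
  rw [← Polynomial.aeval_def, Polynomial.aeval_eq_sum_range, sum_range_succ, hP.coeff_natDegree,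
    one_smul] at hPs
  have hcoeff := congrArg (coeff (e • n)) hPs
  rw [coeff_add, coeff_sum, monomial_pow, coeff_monomial, if_pos rfl, coeff_zero] at hcoeff
  refine isIntegralOverIdeal_iff_exists_sum_range.2
    ⟨e, fun i => coeff ((e - i) • n) (P.coeff i : MvPolynomial (Fin r) R), fun i _ => ?_, ?_⟩
  · rw [prod_pow_finsupp_pow]
    exact (P.coeff i).2 _
  · rw [← hcoeff, add_comm]
    congr 1
    refine sum_congr rfl fun i hi => ?_
    rw [Subalgebra.smul_def, smul_eq_mul, coeff_nsmul_mul_monomial_pow_of_le (mem_range.1 hi).le]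

theorem isIntegral_monomial_of_isIntegralOverIdeal
    (h : IsIntegralOverIdeal c (∏ i, I i ^ n i)) :
    IsIntegral (multiRees I) (monomial n c : MvPolynomial (Fin r) R) := by
  obtain ⟨e, b, hb, hc⟩ := isIntegralOverIdeal_iff_exists_sum_range.1 h
  let B : Fin e → multiRees I := fun i => ⟨monomial ((e - i) • n) (b i),
    (monomial_mem_multiRees_iff I _ _).2 (by rw [← prod_pow_finsupp_pow]; exact hb i i.isLt)⟩
  refine ⟨Polynomial.X ^ e + ∑ i : Fin e, Polynomial.C (B i) * Polynomial.X ^ (i : ℕ),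
    Polynomial.monic_X_pow_add (Polynomial.degree_sum_fin_lt B), ?_⟩
  rw [← Polynomial.aeval_def]
  simp only [map_add, map_pow, map_sum, map_mul, Polynomial.aeval_X, Polynomial.aeval_C]
  have hterm (i : Fin e) : algebraMap (multiRees I) _ (B i) * monomial n c ^ (i : ℕ) =
      monomial (e • n) (b i * c ^ (i : ℕ)) :=
    monomial_mul_monomial_pow_of_le i.isLt.le n _ _
  rw [sum_congr rfl fun i _ => hterm i, Fin.sum_univ_eq_sum_range (fun i => monomial (e • n)
    (b i * c ^ i)), monomial_pow, ← map_sum, ← map_add, hc, map_zero]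

end MultiRees

/-- A homogeneous element `s = s_n t^n` of `R[t_1,…,t_r]` is integral over
the multi-Rees algebra `⊕_m I^m t^m` iff `s_n` is integral over the ideal `I_1^{n_1}⋯I_r^{n_r}`. -/
theorem isIntegral_monomial_multiRees_iff {R : Type*} [CommRing R] {r : ℕ}
    (I : Fin r → Ideal R) (n : Fin r →₀ ℕ) (c : R) :
    IsIntegral (↥(multiRees I)) (MvPolynomial.monomial n c : MvPolynomial (Fin r) R) ↔
      IsIntegralOverIdeal c (∏ i, (I i) ^ n i) :=
  ⟨isIntegralOverIdeal_of_isIntegral_monomial I n c,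
    isIntegral_monomial_of_isIntegralOverIdeal I n c⟩
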